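/- Let $g_{a,0}$ and $g_{a,M}$ denote the densities of the central $\chi^2_1$ and the noncentral $\chi^2_1(M^2/a)$ distributions. With $y_{a,M}$ as the $(1-e^{-v_{aa}(\varepsilon)})$-quantile of $G_{a,M}$, one has $g_{a,0}(y_{a,M})/g_{a,M}(y_{a,M})\to 1$ and, more strongly, $a^{1/4}\big(g_{a,0}(y_{a,M})/g_{a,M}(y_{a,M})-1\big)\to 0$ as $a\to\infty$. -/

import Mathlib

/-!
The χ²₁(δ²) density is `e^{-(y+δ²)/2} cosh(δ√y) / √(2πy)`, so the density ratio is
`e^{δ²/2} / cosh(δ√y)`; since `1 ≤ cosh x ≤ e^{x²/2}` it lies between `e^{-δ²y/2}` and `e^{δ²/2}`,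
whence `|ratio - 1| ≤ δ²(1 + y)` once this is small. With `δ² = M²/a`, the Gaussian Chernoff
bound `P(|Z| ≥ s) ≤ 2e^{-s²/2}` applied to `(Z + δ)²` shows that the `(1 - e^{-v})`-quantile is at
most `4(v + log 2) + 2δ²`, and `v_{aa}(ε) ≤ 1 + log a + √(2/ε)`. Hence
`a^{1/4} |ratio - 1| = O(a^{-3/4} log a) → 0`.
-/

open MeasureTheory ProbabilityTheory Filter Real Set

/-- `ν̃_{ja} = ∑_{i=1}^j 1/(a-i+1)`; in particular `ν̃_{aa}` is the harmonic number. -/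
noncomputable def nutilde (a j : ℕ) : ℝ :=
  ∑ i ∈ Finset.Icc 1 j, 1 / ((a : ℝ) - (i : ℝ) + 1)

/-- The noncentral chi-squared distribution with 1 degree of freedom and noncentrality
`M²/a`: the law of `(Z + M/√a)²` for `Z ∼ N(0,1)`. -/
noncomputable def ncChiSq (a : ℕ) (M : ℝ) : Measure ℝ :=
  Measure.map (fun z => (z + M / Real.sqrt a) ^ 2) (gaussianReal 0 1)

/-- The CDF of the noncentral χ²₁(M²/a) distribution. -/
noncomputable def ncCDF (a : ℕ) (M y : ℝ) : ℝ := ((ncChiSq a M) (Set.Iic y)).toReal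

/-- The density of the noncentral χ²₁(t²/a) distribution. -/
noncomputable def ncPDF (a : ℕ) (t y : ℝ) : ℝ :=
  Real.exp (-(y + t ^ 2 / a) / 2) * y ^ (-(1:ℝ) / 2) / Real.sqrt 2 *
    ∑' k : ℕ, (t ^ 2 * y / a) ^ k /
      (4 ^ k * Nat.factorial k * Real.Gamma ((k : ℝ) + 1 / 2))

open scoped Nat NNReal

lemma four_pow_mul_factorial_mul_Gamma_add_half (k : ℕ) :
    4 ^ k * (k ! : ℝ) * Gamma (k + 1 / 2) = (2 * k)! * √π := by
  cases k with
  | zero => simp [-one_div, Real.Gamma_one_half_eq]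
  | succ k =>
    have h : ((2 * (k + 1))! : ℝ) = 2 ^ (k + 1) * (k + 1)! * (2 * k + 1)‼ := by
      rw [show 2 * (k + 1) = 2 * k + 1 + 1 by ring, Nat.factorial_eq_mul_doubleFactorial,
        show 2 * k + 1 + 1 = 2 * (k + 1) by ring, Nat.doubleFactorial_two_mul]
      push_cast
      ring
    rw [Real.Gamma_nat_add_half, show 2 * (k + 1) - 1 = 2 * k + 1 by omega, h]
    rw [show (4 : ℝ) = 2 ^ 2 by norm_num, ← pow_mul]
    field_simp
    ring

lemma ncPDF_eq_cosh (a : ℕ) (t : ℝ) {y : ℝ} (hy : 0 ≤ y) :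
    ncPDF a t y = exp (-(y + t ^ 2 / a) / 2) * y ^ (-(1:ℝ) / 2) / √2 *
      (cosh √(t ^ 2 * y / a) / √π) := by
  have hx : 0 ≤ t ^ 2 * y / a := by positivity
  have hterm (k : ℕ) : (t ^ 2 * y / a) ^ k / (4 ^ k * k ! * Gamma (k + 1 / 2)) =
      √(t ^ 2 * y / a) ^ (2 * k) / (2 * k)! / √π := by
    rw [four_pow_mul_factorial_mul_Gamma_add_half, pow_mul, Real.sq_sqrt hx, div_div]
  rw [ncPDF, tsum_congr hterm, tsum_div_const, ← Real.cosh_eq_tsum]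

lemma ncPDF_zero_div_ncPDF (a : ℕ) (t : ℝ) {y : ℝ} (hy : 0 < y) :
    ncPDF a 0 y / ncPDF a t y = exp (t ^ 2 / a / 2) / cosh √(t ^ 2 * y / a) := by
  rw [ncPDF_eq_cosh a 0 hy.le, ncPDF_eq_cosh a t hy.le]
  have hexp : exp (-(y + t ^ 2 / a) / 2) = exp (-y / 2) / exp (t ^ 2 / a / 2) := by
    rw [← Real.exp_sub]; ring_nf
  have hpos : 0 < y ^ (-(1:ℝ) / 2) := Real.rpow_pos_of_pos hy _
  rw [hexp]
  simp only [ne_eq, OfNat.ofNat_ne_zero, not_false_eq_true, zero_pow, zero_div, add_zero,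
    zero_mul, Real.sqrt_zero, Real.cosh_zero]
  field_simp

lemma abs_sub_one_le_of_exp_neg_le_of_le_exp {r u : ℝ} (hlo : exp (-u) ≤ r) (hhi : r ≤ exp u)
    (hu : u ≤ 1) : |r - 1| ≤ 2 * u := by
  have hu0 : 0 ≤ u := by
    have := Real.exp_le_exp.mp (hlo.trans hhi)
    linarith
  have hup : exp u - 1 ≤ 2 * u := by
    have h := Real.abs_exp_sub_one_le (x := u) (by rwa [abs_of_nonneg hu0])
    rw [abs_of_nonneg hu0] at h
    exact (le_abs_self _).trans h
  have hdown := Real.add_one_le_exp (-u)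
  rw [abs_le]
  constructor <;> linarith

lemma abs_ncPDF_zero_div_ncPDF_sub_one_le {a : ℕ} {t y : ℝ} (hy : 0 < y)
    (h : t ^ 2 / a * (1 + y) ≤ 2) :
    |ncPDF a 0 y / ncPDF a t y - 1| ≤ t ^ 2 / a * (1 + y) := by
  set c := t ^ 2 / a
  have hc : 0 ≤ c := by positivity
  have hcy : t ^ 2 * y / a = c * y := by ring
  rw [ncPDF_zero_div_ncPDF a t hy, hcy]
  have hcosh : 1 ≤ cosh √(c * y) := Real.one_le_cosh _
  have hcosh' : cosh √(c * y) ≤ exp (c * y / 2) := by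
    simpa [Real.sq_sqrt (by positivity : 0 ≤ c * y)] using Real.cosh_le_exp_half_sq √(c * y)
  have hlo : exp (-(c * (1 + y) / 2)) ≤ exp (c / 2) / cosh √(c * y) := by
    rw [le_div_iff₀ (by positivity)]
    calc exp (-(c * (1 + y) / 2)) * cosh √(c * y)
        ≤ exp (-(c * (1 + y) / 2)) * exp (c * y / 2) := by gcongr
      _ ≤ exp (c / 2) := by rw [← Real.exp_add]; gcongr; nlinarith
  have hhi : exp (c / 2) / cosh √(c * y) ≤ exp (c * (1 + y) / 2) :=
    (div_le_self (by positivity) hcosh).trans (by gcongr; nlinarith)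
  linarith [abs_sub_one_le_of_exp_neg_le_of_le_exp hlo hhi (by linarith)]

lemma hasSubgaussianMGF_id_gaussianReal (v : ℝ≥0) : HasSubgaussianMGF id v (gaussianReal 0 v) where
  integrable_exp_mul t := integrable_exp_mul_gaussianReal t
  mgf_le t := by simp [mgf_id_gaussianReal]

lemma gaussianReal_real_le_abs_le (v : ℝ≥0) {s : ℝ} (hs : 0 ≤ s) :
    (gaussianReal 0 v).real {z | s ≤ |z|} ≤ 2 * exp (-s ^ 2 / (2 * v)) := by
  have h := hasSubgaussianMGF_id_gaussianReal v
  have hsplit : {z : ℝ | s ≤ |z|} = {z | s ≤ id z} ∪ {z | s ≤ (-id) z} := by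
    ext z; simp [le_abs', le_neg, or_comm]
  rw [hsplit, two_mul]
  exact (measureReal_union_le _ _).trans (add_le_add (h.measure_ge_le hs) (h.neg.measure_ge_le hs))

instance (a : ℕ) (M : ℝ) : IsProbabilityMeasure (ncChiSq a M) :=
  Measure.isProbabilityMeasure_map (by fun_prop)

lemma ncChiSq_real_Ioi_le (a : ℕ) (M y : ℝ) :
    (ncChiSq a M).real (Ioi y) ≤ 2 * exp (-(max 0 (√y - |M / √a|)) ^ 2 / 2) := by
  have hsub : (fun z => (z + M / √a) ^ 2) ⁻¹' Ioi y ⊆ {z | max 0 (√y - |M / √a|) ≤ |z|} := by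
    intro z hz
    have : √y ≤ |z + M / √a| := by
      rw [← Real.sqrt_sq_eq_abs]; exact Real.sqrt_le_sqrt hz.le
    simp only [mem_ofPred_eq, max_le_iff, abs_nonneg, true_and]
    linarith [abs_add_le z (M / √a)]
  rw [ncChiSq, map_measureReal_apply (by fun_prop) measurableSet_Ioi]
  simpa using (measureReal_mono hsub).trans (gaussianReal_real_le_abs_le 1 (le_max_left _ _))

lemma le_of_ncCDF_eq_one_sub_exp {a : ℕ} {M y v : ℝ} (hy : 0 ≤ y)
    (h : ncCDF a M y = 1 - exp (-v)) : y ≤ 4 * (v + log 2) + 2 * (M ^ 2 / a) := by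
  set δ := M / √a
  set s := max 0 (√y - |δ|)
  have htail : (ncChiSq a M).real (Ioi y) = exp (-v) := by
    rw [← compl_Iic, probReal_compl_eq_one_sub measurableSet_Iic, measureReal_def]
    rw [ncCDF] at h
    linarith
  have hs : s ^ 2 ≤ 2 * (v + log 2) := by
    have h2 : exp (-v) ≤ exp (log 2 + -s ^ 2 / 2) := by
      rw [Real.exp_add, Real.exp_log two_pos, ← htail]
      exact ncChiSq_real_Ioi_le a M y
    linarith [Real.exp_le_exp.mp h2]
  have hδ : δ ^ 2 = M ^ 2 / a := by rw [div_pow, Real.sq_sqrt (Nat.cast_nonneg a)]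
  have hsqrt : √y ≤ s + |δ| := by linarith [le_max_right 0 (√y - |δ|)]
  calc y = √y ^ 2 := (Real.sq_sqrt hy).symm
    _ ≤ (s + |δ|) ^ 2 := by gcongr
    _ ≤ 2 * s ^ 2 + 2 * |δ| ^ 2 := by nlinarith [sq_nonneg (s - |δ|)]
    _ ≤ 4 * (v + log 2) + 2 * (M ^ 2 / a) := by rw [sq_abs, hδ]; linarith

lemma nutilde_self_eq_harmonic (a : ℕ) : nutilde a a = harmonic a := by
  rw [nutilde, harmonic_eq_sum_Icc]
  push_cast
  refine Finset.sum_nbij' (fun i => a + 1 - i) (fun i => a + 1 - i) ?_ ?_ ?_ ?_ ?_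
  iterate 4
    intro i hi
    simp only [Finset.mem_Icc] at hi ⊢
    omega
  · intro i hi
    rw [Finset.mem_Icc] at hi
    rw [Nat.cast_sub (by omega)]
    push_cast
    ring

lemma tendsto_rpow_mul_add_mul_log_div_atTop {p : ℝ} (hp : p < 1) (C D : ℝ) :
    Tendsto (fun x : ℝ => x ^ p * ((C + D * log x) / x)) atTop (nhds 0) := by
  have h1 : Tendsto (fun x : ℝ => x ^ (p - 1)) atTop (nhds 0) := by
    simpa using tendsto_rpow_neg_atTop (y := 1 - p) (by linarith)
  have h2 : Tendsto (fun x : ℝ => log x / x ^ (1 - p)) atTop (nhds 0) :=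
    (isLittleO_log_rpow_atTop (by linarith)).tendsto_div_nhds_zero
  have := (h1.const_mul C).add (h2.const_mul D)
  rw [mul_zero, mul_zero, add_zero] at this
  refine this.congr' ?_
  filter_upwards [eventually_gt_atTop 0] with x hx
  simp only [Real.rpow_sub hx, Real.rpow_one]
  field_simp

lemma tendsto_zero_of_tendsto_rpow_mul {p : ℝ} (hp : 0 ≤ p) {f : ℕ → ℝ}
    (h : Tendsto (fun n : ℕ => (n : ℝ) ^ p * f n) atTop (nhds 0)) :
    Tendsto f atTop (nhds 0) := by
  refine squeeze_zero_norm' ?_ (by simpa using h.norm)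
  filter_upwards [eventually_ge_atTop 1] with n hn
  rw [Real.norm_eq_abs, abs_of_nonneg (by positivity : (0 : ℝ) ≤ n ^ p)]
  exact le_mul_of_one_le_left (abs_nonneg _) (Real.one_le_rpow (by exact_mod_cast hn) hp)

lemma tendsto_rpow_mul_of_le_log_div {p : ℝ} (hp : p < 1) {C D : ℝ} {w : ℕ → ℝ}
    (h0 : ∀ᶠ n in atTop, 0 ≤ w n) (hw : ∀ᶠ n : ℕ in atTop, w n ≤ (C + D * log n) / n) :
    Tendsto (fun n : ℕ => (n : ℝ) ^ p * w n) atTop (nhds 0) := by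
  refine squeeze_zero' ?_ ?_
    ((tendsto_rpow_mul_add_mul_log_div_atTop hp C D).comp tendsto_natCast_atTop_atTop)
  · filter_upwards [h0] with n hn using mul_nonneg (by positivity) hn
  · filter_upwards [hw] with n hn using mul_le_mul_of_nonneg_left hn (by positivity)

lemma le_of_ncCDF_eq_one_sub_exp_nutilde {a : ℕ} (ha : 1 ≤ a) {M y c : ℝ} (hy : 0 ≤ y)
    (h : ncCDF a M y = 1 - exp (-(nutilde a a + c))) :
    y ≤ 4 * (1 + c + log 2) + 2 * M ^ 2 + 4 * log a := by
  have hv := le_of_ncCDF_eq_one_sub_exp hy h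
  have hH : nutilde a a ≤ 1 + log a := by
    simpa [nutilde_self_eq_harmonic] using harmonic_le_one_add_log a
  have hM : M ^ 2 / a ≤ M ^ 2 := div_le_self (sq_nonneg M) (by exact_mod_cast ha)
  linarith

theorem density_ratio_tendsto_one_general (ε M : ℝ)
    (y : ℕ → ℝ)
    (hy : ∀ a : ℕ, 1 ≤ a → 0 < y a ∧
      ncCDF a M (y a) = 1 - Real.exp (-(nutilde a a + Real.sqrt (2 / ε)))) :
    Tendsto (fun a : ℕ => ncPDF a 0 (y a) / ncPDF a M (y a)) atTop (nhds 1) ∧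
    Tendsto (fun a : ℕ => (a : ℝ) ^ ((1:ℝ) / 4) *
      (ncPDF a 0 (y a) / ncPDF a M (y a) - 1)) atTop (nhds 0) := by
  set w : ℕ → ℝ := fun a => M ^ 2 / a * (1 + y a)
  have hw : Tendsto (fun a : ℕ => (a : ℝ) ^ ((1:ℝ) / 4) * w a) atTop (nhds 0) := by
    set K := 4 * (1 + √(2 / ε) + log 2) + 2 * M ^ 2
    refine tendsto_rpow_mul_of_le_log_div (C := M ^ 2 * (1 + K)) (D := 4 * M ^ 2) (by norm_num)
      ?_ ?_ <;> filter_upwards [eventually_ge_atTop 1] with a ha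
    · have := (hy a ha).1
      positivity
    · have hya := le_of_ncCDF_eq_one_sub_exp_nutilde ha (hy a ha).1.le (hy a ha).2
      calc w a = M ^ 2 * (1 + y a) / a := by ring
        _ ≤ (M ^ 2 * (1 + K) + 4 * M ^ 2 * log a) / a := by gcongr; nlinarith [sq_nonneg M]
  have hratio : ∀ᶠ a in atTop, |ncPDF a 0 (y a) / ncPDF a M (y a) - 1| ≤ w a := by
    filter_upwards [(tendsto_zero_of_tendsto_rpow_mul (by norm_num) hw).eventually
      (eventually_le_nhds two_pos), eventually_ge_atTop 1] with a hw2 ha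
    exact abs_ncPDF_zero_div_ncPDF_sub_one_le (hy a ha).1 hw2
  have hquarter : Tendsto (fun a : ℕ => (a : ℝ) ^ ((1:ℝ) / 4) *
      (ncPDF a 0 (y a) / ncPDF a M (y a) - 1)) atTop (nhds 0) := by
    refine squeeze_zero_norm' ?_ hw
    filter_upwards [hratio] with a h
    rw [norm_mul, Real.norm_of_nonneg (by positivity), Real.norm_eq_abs]
    exact mul_le_mul_of_nonneg_left h (by positivity)
  refine ⟨?_, hquarter⟩
  simpa using (tendsto_zero_of_tendsto_rpow_mul (by norm_num) hquarter).add_const 1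

/-- With `y_{a,M} = G_{a,M}⁻¹(1 - e^{-v_{aa}(ε)})`, `v_{aa}(ε) = ν̃_{aa} + √(2/ε)`:
`g_{a,0}(y_{a,M})/g_{a,M}(y_{a,M}) → 1`, and moreover
`a^{1/4}(g_{a,0}(y_{a,M})/g_{a,M}(y_{a,M}) - 1) → 0` as `a → ∞`. -/
theorem density_ratio_tendsto_one (ε M : ℝ) (hε0 : 0 < ε) (hε1 : ε < 1) (hM : 0 ≤ M)
    (y : ℕ → ℝ)
    (hy : ∀ a : ℕ, 1 ≤ a → 0 < y a ∧
      ncCDF a M (y a) = 1 - Real.exp (-(nutilde a a + Real.sqrt (2 / ε)))) :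
    Tendsto (fun a : ℕ => ncPDF a 0 (y a) / ncPDF a M (y a)) atTop (nhds 1) ∧
    Tendsto (fun a : ℕ => (a : ℝ) ^ ((1:ℝ) / 4) *
      (ncPDF a 0 (y a) / ncPDF a M (y a) - 1)) atTop (nhds 0) :=
  density_ratio_tendsto_one_general ε M y hy
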